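/- If s is chosen from the measure π_{n-1} on rooted unlabeled trees with n-1 vertices and one then moves from s to a tree t with n vertices with probability P_u(s,t), then t is distributed according to the measure π_n; that is, for every t ∈ 𝒯_n, Σ_{s ↗ t} π_{n-1}(s) P_u(s,t) = π_n(t). -/

import Mathlib

/-!
Common definitions: rooted unlabeled trees on `n` vertices, the growth/pruning
coefficients `n(t,t')` and `m(t,t')`, the measure `π_n`, the up/down transition
probabilities, the down-up and up-down Markov chains, and separation distance.

A rooted tree is represented as `PreTree.node cs` where `cs` is the list of
subtrees of the root's children.  An *unlabeled* rooted tree is represented by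
its canonical representative (children recursively sorted by an injective
encoding into `ℕ`), and `trees n` is the finite set of canonical rooted trees
on `n` vertices.
-/

namespace RootedTreeChain

inductive PreTree : Type where
  | node : List PreTree → PreTree

namespace PreTree

/- Number of vertices. -/
mutual
  def size : PreTree → ℕ
    | .node cs => 1 + sizeList cs
  def sizeList : List PreTree → ℕ
    | [] => 0
    | t :: ts => size t + sizeList ts
end

mutual
def deq : (a b : PreTree) → Decidable (a = b)
  | .node cs, .node ds =>
    match deqList cs ds with
    | isTrue h => isTrue (by rw [h])
    | isFalse h => isFalse (by intro hh; cases hh; exact h rfl)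
def deqList : (as bs : List PreTree) → Decidable (as = bs)
  | [], [] => isTrue rfl
  | [], _ :: _ => isFalse (by simp)
  | _ :: _, [] => isFalse (by simp)
  | a :: as, b :: bs =>
    match deq a b, deqList as bs with
    | isTrue h1, isTrue h2 => isTrue (by rw [h1, h2])
    | isFalse h1, _ => isFalse (by intro hh; injection hh; contradiction)
    | _, isFalse h2 => isFalse (by intro hh; injection hh; contradiction)
end

instance : DecidableEq PreTree := deq

/- An injective encoding of trees into `ℕ`, used only to sort children
so that each unlabeled rooted tree has a unique canonical representative. -/
mutual
  def enc : PreTree → ℕ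
    | .node cs => encList cs
  def encList : List PreTree → ℕ
    | [] => 0
    | t :: ts => Nat.pair (enc t) (encList ts) + 1
end

/- Canonical representative of the isomorphism class of a rooted tree:
recursively sort the children by their encoding. -/
mutual
  def canon : PreTree → PreTree
    | .node cs => .node ((canonList cs).mergeSort (fun a b => enc a ≤ enc b))
  def canonList : List PreTree → List PreTree
    | [] => []
    | t :: ts => canon t :: canonList ts
end

/-- The one-vertex rooted tree `•`. -/
def leaf : PreTree := .node []

/- The addresses (paths of child indices from the root) of all vertices. -/
mutual
  def positions : PreTree → List (List ℕ)
    | .node cs => [] :: positionsList 0 cs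
  def positionsList : ℕ → List PreTree → List (List ℕ)
    | _, [] => []
    | i, t :: ts => (positions t).map (fun p => i :: p) ++ positionsList (i + 1) ts
end

/- The addresses of all terminal vertices (vertices with no outgoing edge). -/
mutual
  def termPositions : PreTree → List (List ℕ)
    | .node [] => [[]]
    | .node (c :: cs) => termPositionsList 0 (c :: cs)
  def termPositionsList : ℕ → List PreTree → List (List ℕ)
    | _, [] => []
    | i, t :: ts => (termPositions t).map (fun p => i :: p) ++ termPositionsList (i + 1) ts
end

/- Attach a new terminal vertex by an edge to the vertex at address `p`. -/
mutual
  def addLeafAt : PreTree → List ℕ → PreTree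
    | .node cs, [] => .node (cs ++ [leaf])
    | .node cs, i :: p => .node (addLeafAtList cs i p)
  def addLeafAtList : List PreTree → ℕ → List ℕ → List PreTree
    | [], _, _ => []
    | t :: ts, 0, p => addLeafAt t p :: ts
    | t :: ts, i + 1, p => t :: addLeafAtList ts i p
end

/- Remove the (terminal) vertex at address `p` together with the edge into it. -/
mutual
  def removeAt : PreTree → List ℕ → PreTree
    | .node cs, [] => .node cs
    | .node cs, [i] => .node (cs.eraseIdx i)
    | .node cs, i :: p => .node (removeAtList cs i p)
  def removeAtList : List PreTree → ℕ → List ℕ → List PreTree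
    | [], _, _ => []
    | t :: ts, 0, p => removeAt t p :: ts
    | t :: ts, i + 1, p => t :: removeAtList ts i p
end

/-- For `s ↗ t` (and more generally any `s, t` with `size t = size s + 1`),
`ncoef s t` is `n(s,t)`: the number of vertices of `s` to which a new edge can
be added to obtain `t`. -/
def ncoef (s t : PreTree) : ℕ :=
  ((positions s).filter (fun p => canon (addLeafAt s p) = t)).length

/-- For `s ↗ t`, `mcoef s t` is `m(s,t)`: the number of edges of `t` (into a
terminal vertex) which when removed give `s`. -/
def mcoef (s t : PreTree) : ℕ :=
  ((termPositions t).filter (fun p => canon (removeAt t p) = s)).length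

/-- The list of all (canonical representatives of) rooted unlabeled trees on
`n` vertices: every tree on `n+1 ≥ 2` vertices is obtained by attaching a new
terminal vertex to a tree on `n` vertices. -/
def treeList : ℕ → List PreTree
  | 0 => []
  | 1 => [leaf]
  | n + 2 =>
      ((treeList (n + 1)).flatMap
        (fun t => (positions t).map (fun p => canon (addLeafAt t p)))).dedup

/-- The set `𝒯_n` of rooted unlabeled trees on `n` vertices. -/
def trees (n : ℕ) : Finset PreTree := (treeList n).toFinset

/-- `T_n = |𝒯_n|`, the number of rooted unlabeled trees on `n` vertices. -/
def T (n : ℕ) : ℕ := (trees n).card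

/-- Generalized growth coefficients: `nGen k t t'` is the coefficient `n(t,t')`
of `t'` in `G^k(t)` (for `size t' = size t + k`). -/
def nGen : ℕ → PreTree → PreTree → ℕ
  | 0, t, t' => if t = t' then 1 else 0
  | k + 1, t, t' => ((treeList (t.size + k)).map (fun s => nGen k t s * ncoef s t')).sum

/-- Generalized pruning coefficients: `mGen k t t'` is the coefficient `m(t,t')`
of `t` in `P^k(t')` (for `size t' = size t + k`). -/
def mGen : ℕ → PreTree → PreTree → ℕ
  | 0, t, t' => if t = t' then 1 else 0
  | k + 1, t, t' => ((treeList (t'.size - 1)).map (fun s => mcoef s t' * mGen k t s)).sum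

/-- `m(t) = m(•,t)`, the number of ways to take `t` apart by sequentially
removing terminal edges. -/
def mWt (t : PreTree) : ℕ := mGen (t.size - 1) leaf t

/-- `n(t) = n(•,t)`, the number of ways to build `t` up from `•`. -/
def nWt (t : PreTree) : ℕ := nGen (t.size - 1) leaf t

/-- The measure `π_n(t) = m(t) n(t) / ∏_{i=2}^n C(i,2)` on `𝒯_n`. -/
def piM (n : ℕ) (t : PreTree) : ℚ :=
  (mWt t * nWt t : ℚ) / ∏ i ∈ Finset.Icc 2 n, (Nat.choose i 2 : ℚ)

/-- Upward transition probability `P_u(s,t) = m(s,t) n(t) / (C(n,2) n(s))`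
from `s ∈ 𝒯_{n-1}` to `t ∈ 𝒯_n`. -/
def Pu (n : ℕ) (s t : PreTree) : ℚ :=
  (mcoef s t : ℚ) * (nWt t : ℚ) / ((Nat.choose n 2 : ℚ) * (nWt s : ℚ))

/-- Downward transition probability `P_d(t,s) = m(s,t) m(s) / m(t)`
from `t ∈ 𝒯_n` to `s ∈ 𝒯_{n-1}`. -/
def Pd (t s : PreTree) : ℚ :=
  (mcoef s t : ℚ) * (mWt s : ℚ) / (mWt t : ℚ)

/-- The down-up Markov chain on `𝒯_n`:
`K(t,t') = Σ_{s : s ↗ t, s ↗ t'} P_d(t,s) P_u(s,t')`.  (The sum may be taken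
over all `s ∈ 𝒯_{n-1}` since the summand vanishes unless `s ↗ t` and `s ↗ t'`.) -/
def K (n : ℕ) (t t' : PreTree) : ℚ :=
  ∑ s ∈ trees (n - 1), Pd t s * Pu n s t'

/-- `r`-step transition probabilities `K^r(t,t')` of the down-up chain. -/
def Kpow (n : ℕ) : ℕ → PreTree → PreTree → ℚ
  | 0, t, t' => if t = t' then 1 else 0
  | r + 1, t, t' => ∑ s ∈ trees n, K n t s * Kpow n r s t'

/-- The up-down Markov chain on `𝒯_n`:
`DU_n(t,t') = Σ_{s : s ⋗ t, s ⋗ t'} P_u(t,s) P_d(s,t')`. -/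
def DU (n : ℕ) (t t' : PreTree) : ℚ :=
  ∑ s ∈ trees (n + 1), Pu (n + 1) t s * Pd s t'

/-- `r`-step transition probabilities of the up-down chain. -/
def DUpow (n : ℕ) : ℕ → PreTree → PreTree → ℚ
  | 0, t, t' => if t = t' then 1 else 0
  | r + 1, t, t' => ∑ s ∈ trees n, DU n t s * DUpow n r s t'

/-- Maximal separation distance `s^*(r) = max_{t,t' ∈ 𝒯_n} [1 - K^r(t,t')/π_n(t')]`
of the down-up chain on `𝒯_n`. -/
noncomputable def sStar (n r : ℕ) : ℝ :=
  sSup {x : ℝ | ∃ t ∈ trees n, ∃ t' ∈ trees n,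
    x = 1 - (Kpow n r t t' : ℝ) / (piM n t' : ℝ)}

/-- Maximal separation distance of the up-down chain on `𝒯_n`. -/
noncomputable def sStarDU (n r : ℕ) : ℝ :=
  sSup {x : ℝ | ∃ t ∈ trees n, ∃ t' ∈ trees n,
    x = 1 - (DUpow n r t t' : ℝ) / (piM n t' : ℝ)}

/-- The path on `n` vertices (rooted at an end): the unique rooted tree on
`n ≥ 2` vertices with exactly one terminal vertex. -/
def pathTree : ℕ → PreTree
  | 0 => leaf
  | 1 => leaf
  | n + 2 => .node [pathTree (n + 1)]

/-- The star on `n` vertices (rooted at the center): the unique rooted tree on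
`n` vertices with `n-1` terminal vertices. -/
def starTree (n : ℕ) : PreTree := .node (List.replicate (n - 1) leaf)


/- The order of the symmetry group `SG(t) = ∏_{v ∈ t} SG(t,v)`, where for a
vertex `v` with children `v_1, …, v_k`, `SG(t,v)` is generated by the
permutations exchanging isomorphic subtrees rooted at the `v_i`. -/
mutual
  def sgOrder : PreTree → ℕ
    | .node cs => sgOrderList cs *
        ((canonList cs).dedup.map (fun c => Nat.factorial ((canonList cs).count c))).prod
  def sgOrderList : List PreTree → ℕ
    | [] => 1
    | t :: ts => sgOrder t * sgOrderList ts
end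

/- `hProd t = ∏_{v ∈ t} h(v)`, the product over all vertices `v` of `t` of the
number `h(v)` of vertices of the subtree rooted at `v`. -/
mutual
  def hProd : PreTree → ℕ
    | .node cs => size (.node cs) * hProdList cs
  def hProdList : List PreTree → ℕ
    | [] => 1
    | t :: ts => hProd t * hProdList ts
end

/-- The matrix entry of `G P : ℂ𝒯_n → ℂ𝒯_n`: the coefficient of `t'` in `G(P(t))`. -/
def gpEntry (n : ℕ) (t t' : PreTree) : ℕ :=
  ∑ s ∈ trees (n - 1), mcoef s t * ncoef s t'

/-- The matrix entry of `(G P)^l : ℂ𝒯_n → ℂ𝒯_n`: the coefficient of `t'` in `(GP)^l(t)`. -/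
def gpPow (n : ℕ) : ℕ → PreTree → PreTree → ℕ
  | 0, t, t' => if t = t' then 1 else 0
  | l + 1, t, t' => ∑ u ∈ trees n, gpPow n l t u * gpEntry n u t'

end PreTree

/-!
Cancelling `n(s)`, each summand is `π_{n-1}(s) P_u(s,t) = m(s,t) m(s) n(t) / ∏_{i=2}^n C(i,2)`,
and summing over `s` gives `π_n(t)` by the pruning recursion `m(t) = Σ_s m(s,t) m(s)`.
The cancellation needs `n(s) ≠ 0`, which holds because every tree of `𝒯_{n-1}` is grown
from `•` by attaching terminal vertices.
-/

namespace PreTree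

theorem sizeList_eq_sum (ts : List PreTree) : sizeList ts = (ts.map size).sum := by
  induction ts with
  | nil => rfl
  | cons t ts ih => rw [sizeList, List.map_cons, List.sum_cons, ih]

theorem sizeList_perm {l l' : List PreTree} (h : l.Perm l') : sizeList l = sizeList l' := by
  rw [sizeList_eq_sum, sizeList_eq_sum, (h.map size).sum_eq]

mutual
theorem size_canon : ∀ t : PreTree, (canon t).size = t.size
  | .node cs => by
    rw [canon, size, size, sizeList_perm (List.mergeSort_perm _ _), sizeList_canonList cs]
theorem sizeList_canonList : ∀ ts : List PreTree, sizeList (canonList ts) = sizeList ts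
  | [] => rfl
  | t :: ts => by rw [canonList, sizeList, sizeList, size_canon t, sizeList_canonList ts]
end

theorem le_of_cons_mem_positionsList :
    ∀ {ts : List PreTree} {j i : ℕ} {p : List ℕ}, (i :: p) ∈ positionsList j ts → j ≤ i
  | [], _, _, _, h => by simp [positionsList] at h
  | u :: us, j, i, p, h => by
    rw [positionsList, List.mem_append, List.mem_map] at h
    rcases h with ⟨q, _, hq⟩ | h
    · cases hq
      exact le_rfl
    · exact Nat.le_of_succ_le (le_of_cons_mem_positionsList h)

mutual
theorem size_addLeafAt : ∀ (t : PreTree) (p : List ℕ), p ∈ positions t →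
    (addLeafAt t p).size = t.size + 1
  | .node cs, [], _ => by
    simp only [addLeafAt, size, sizeList_eq_sum, List.map_append, List.sum_append]
    simp [leaf, size, sizeList]
    omega
  | .node cs, i :: p, h => by
    rw [positions, List.mem_cons] at h
    have hcs := sizeList_addLeafAtList cs 0 i p (h.resolve_left (List.cons_ne_nil _ _))
    rw [Nat.sub_zero] at hcs
    rw [addLeafAt, size, size, hcs]
    omega
theorem sizeList_addLeafAtList : ∀ (ts : List PreTree) (j i : ℕ) (p : List ℕ),
    (i :: p) ∈ positionsList j ts →
    sizeList (addLeafAtList ts (i - j) p) = sizeList ts + 1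
  | [], _, _, _, h => by simp [positionsList] at h
  | u :: us, j, i, p, h => by
    rw [positionsList, List.mem_append, List.mem_map] at h
    rcases h with ⟨q, hq, hqi⟩ | h
    · cases hqi
      rw [Nat.sub_self, addLeafAtList, sizeList, sizeList, size_addLeafAt u p hq]
      omega
    · have hji : i - j = (i - (j + 1)) + 1 := by
        have := le_of_cons_mem_positionsList h
        omega
      rw [hji, addLeafAtList, sizeList, sizeList, sizeList_addLeafAtList us (j + 1) i p h]
      omega
end

theorem mem_treeList_add_two {n : ℕ} {t : PreTree} :
    t ∈ treeList (n + 2) ↔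
      ∃ u ∈ treeList (n + 1), ∃ p ∈ positions u, canon (addLeafAt u p) = t := by
  simp only [treeList, List.mem_dedup, List.mem_flatMap, List.mem_map]

theorem size_of_mem_treeList : ∀ {n : ℕ} {t : PreTree}, t ∈ treeList n → t.size = n
  | 0, _, h => by simp [treeList] at h
  | 1, t, h => by
    rw [treeList, List.mem_singleton] at h
    subst h
    rfl
  | n + 2, _, h => by
    obtain ⟨u, hu, p, hp, rfl⟩ := mem_treeList_add_two.1 h
    rw [size_canon, size_addLeafAt u p hp, size_of_mem_treeList hu]

theorem ncoef_pos {s t : PreTree} {p : List ℕ} (hp : p ∈ positions s)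
    (ht : canon (addLeafAt s p) = t) : 0 < ncoef s t :=
  List.length_pos_of_mem (List.mem_filter.2 ⟨hp, decide_eq_true ht⟩)

theorem nWt_pos : ∀ {n : ℕ} {t : PreTree}, t ∈ treeList n → 0 < nWt t
  | 0, _, h => by simp [treeList] at h
  | 1, t, h => by
    rw [treeList, List.mem_singleton] at h
    subst h
    exact Nat.one_pos
  | n + 2, t, h => by
    obtain ⟨u, hu, p, hp, hpt⟩ := mem_treeList_add_two.1 h
    have hu_pos : 0 < nGen n leaf u := by
      simpa [nWt, size_of_mem_treeList hu] using nWt_pos hu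
    have hle : nGen n leaf u * ncoef u t ≤ nWt t := by
      rw [nWt, size_of_mem_treeList h, show n + 2 - 1 = n + 1 from rfl, nGen]
      exact List.single_le_sum (fun _ _ => Nat.zero_le _) _
        (List.mem_map_of_mem (by rwa [show leaf.size = 1 from rfl, add_comm]))
    exact lt_of_lt_of_le (Nat.mul_pos hu_pos (ncoef_pos hp hpt)) hle

theorem nodup_treeList : ∀ n, (treeList n).Nodup
  | 0 => List.nodup_nil
  | 1 => List.nodup_singleton _
  | _ + 2 => List.nodup_dedup _

theorem mem_trees {n : ℕ} {t : PreTree} : t ∈ trees n ↔ t ∈ treeList n :=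
  List.mem_toFinset

theorem mWt_eq_sum {n : ℕ} {t : PreTree} (ht : t ∈ trees (n + 2)) :
    (mWt t : ℚ) = ∑ s ∈ trees (n + 1), (mcoef s t : ℚ) * mWt s := by
  have hsize := size_of_mem_treeList (mem_trees.1 ht)
  rw [trees, List.sum_toFinset _ (nodup_treeList (n + 1)), mWt, hsize,
    show n + 2 - 1 = n + 1 from rfl, mGen, hsize, Nat.cast_list_sum, List.map_map]
  refine congrArg List.sum (List.map_congr_left fun s hs => ?_)
  rw [Function.comp_apply, mWt, size_of_mem_treeList hs]
  push_cast
  rfl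

theorem piM_mul_Pu {n : ℕ} {s : PreTree} (hs : s ∈ trees (n + 1)) (t : PreTree) :
    piM (n + 1) s * Pu (n + 2) s t =
      (mcoef s t : ℚ) * mWt s * nWt t / ∏ i ∈ Finset.Icc 2 (n + 2), (i.choose 2 : ℚ) := by
  have hs_ne : (nWt s : ℚ) ≠ 0 := by exact_mod_cast (nWt_pos (mem_trees.1 hs)).ne'
  rw [piM, Pu, Finset.prod_Icc_succ_top (by omega : 2 ≤ n + 2)]
  field_simp

end PreTree

open PreTree in
/-- If `s` is chosen from `π_{n-1}` on rooted unlabeled trees with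
`n-1` vertices and one moves from `s` to `t ∈ 𝒯_n` with probability `P_u(s,t)`,
then `t` is distributed according to `π_n`:
for every `t ∈ 𝒯_n`, `Σ_{s ↗ t} π_{n-1}(s) P_u(s,t) = π_n(t)`. -/
theorem pi_preserved_up (n : ℕ) (hn : 2 ≤ n) (t : PreTree) (ht : t ∈ trees n) :
    ∑ s ∈ trees (n - 1), piM (n - 1) s * Pu n s t = piM n t := by
  obtain ⟨k, rfl⟩ : ∃ k, n = k + 2 := ⟨n - 2, by omega⟩
  rw [show k + 2 - 1 = k + 1 from rfl, Finset.sum_congr rfl fun s hs => piM_mul_Pu hs t,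
    ← Finset.sum_div, ← Finset.sum_mul, ← mWt_eq_sum ht, piM]

end RootedTreeChain
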